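/- Let p and q be two distinct primes dividing a positive integer n with n > pq. Then the diameter of the zero-divisor graph Γ(Z_n) equals 3. -/

import Mathlib

/-- `x` is a vertex of the zero-divisor graph of `ZMod n`:
a nonzero zero-divisor. -/
def ZDVertex (n : ℕ) (x : ZMod n) : Prop :=
  x ≠ 0 ∧ ∃ y : ZMod n, y ≠ 0 ∧ x * y = 0

/-- The zero-divisor graph `Γ(ZMod n)`: vertices are the nonzero zero-divisors,
two distinct vertices are adjacent iff their product is zero. -/
def zdGraph (n : ℕ) : SimpleGraph {x : ZMod n // ZDVertex n x} where
  Adj a b := a ≠ b ∧ (a : ZMod n) * (b : ZMod n) = 0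
  symm := by
    constructor
    intro a b h
    exact ⟨h.1.symm, by rw [mul_comm]; exact h.2⟩
  loopless := by
    constructor
    intro a h
    exact h.1 rfl

/-!
Any two vertices `u`, `v` are at distance at most `3`: pick nonzero annihilators `x` of `u` and
`y` of `v`; if `x * y = 0` then `u - x - y - v` is a walk, and otherwise `x * y` is a nonzero
common annihilator of `u` and `v`. Conversely `p` and `q` are vertices with `p * q ≠ 0`, and by
Bézout any common annihilator `c` of the coprime `p` and `q` is `0`, so they have no common
neighbour and lie at distance exactly `3`.
-/

lemma eq_zero_of_isCoprime_of_mul_eq_zero {R : Type*} [CommSemiring R] {a b c : R}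
    (h : IsCoprime a b) (ha : a * c = 0) (hb : b * c = 0) : c = 0 := by
  obtain ⟨u, v, huv⟩ := h
  calc c = (u * a + v * b) * c := by rw [huv, one_mul]
    _ = u * (a * c) + v * (b * c) := by ring
    _ = 0 := by rw [ha, hb, mul_zero, mul_zero, add_zero]

namespace ZMod

lemma natCast_ne_zero_of_pos_of_lt {m n : ℕ} (h0 : 0 < m) (hlt : m < n) : (m : ZMod n) ≠ 0 :=
  (natCast_eq_zero_iff m n).not.mpr (Nat.not_dvd_of_pos_of_lt h0 hlt)

end ZMod

section ZeroDivisorGraph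

variable {n : ℕ}

lemma zdVertex_natCast_of_dvd {m : ℕ} (hm : m ∣ n) (h1 : 1 < m) (hlt : m < n) :
    ZDVertex n m := by
  have hm0 : 0 < m := zero_lt_one.trans h1
  have hn : 0 < n := hm0.trans hlt
  refine ⟨ZMod.natCast_ne_zero_of_pos_of_lt hm0 hlt, (n / m : ℕ),
    ZMod.natCast_ne_zero_of_pos_of_lt (Nat.div_pos (Nat.le_of_dvd hn hm) hm0)
      (Nat.div_lt_self hn h1), ?_⟩
  rw [← Nat.cast_mul, Nat.mul_div_cancel' hm, ZMod.natCast_self]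

lemma zdGraph_edist_le_one_of_mul_eq_zero {a b : {x : ZMod n // ZDVertex n x}}
    (h : (a : ZMod n) * b = 0) : (zdGraph n).edist a b ≤ 1 := by
  rw [SimpleGraph.edist_le_one_iff_adj_or_eq]
  by_cases hab : a = b
  · exact Or.inr hab
  · exact Or.inl ⟨hab, h⟩

lemma zdGraph_edist_le_three (u v : {x : ZMod n // ZDVertex n x}) :
    (zdGraph n).edist u v ≤ 3 := by
  obtain ⟨x, hx, hux⟩ := u.2.2
  obtain ⟨y, hy, hvy⟩ := v.2.2
  let X : {x : ZMod n // ZDVertex n x} := ⟨x, hx, u, u.2.1, by rwa [mul_comm]⟩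
  let Y : {x : ZMod n // ZDVertex n x} := ⟨y, hy, v, v.2.1, by rwa [mul_comm]⟩
  have huX : (zdGraph n).edist u X ≤ 1 := zdGraph_edist_le_one_of_mul_eq_zero hux
  have hYv : (zdGraph n).edist Y v ≤ 1 :=
    zdGraph_edist_le_one_of_mul_eq_zero (by rw [mul_comm]; exact hvy)
  by_cases hxy : x * y = 0
  · have hXY : (zdGraph n).edist X Y ≤ 1 := zdGraph_edist_le_one_of_mul_eq_zero hxy
    calc (zdGraph n).edist u v ≤ (zdGraph n).edist u X + (zdGraph n).edist X v :=
          SimpleGraph.edist_triangle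
      _ ≤ (zdGraph n).edist u X + ((zdGraph n).edist X Y + (zdGraph n).edist Y v) := by
          gcongr; exact SimpleGraph.edist_triangle
      _ ≤ 1 + (1 + 1) := by gcongr
      _ = 3 := by norm_num
  · let Z : {x : ZMod n // ZDVertex n x} :=
      ⟨x * y, hxy, u, u.2.1, by rw [mul_comm, ← mul_assoc, hux, zero_mul]⟩
    have huZ : (zdGraph n).edist u Z ≤ 1 :=
      zdGraph_edist_le_one_of_mul_eq_zero (by rw [← mul_assoc, hux, zero_mul])
    have hZv : (zdGraph n).edist Z v ≤ 1 :=
      zdGraph_edist_le_one_of_mul_eq_zero (by rw [mul_assoc, mul_comm y, hvy, mul_zero])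
    calc (zdGraph n).edist u v ≤ (zdGraph n).edist u Z + (zdGraph n).edist Z v :=
          SimpleGraph.edist_triangle
      _ ≤ 1 + 1 := by gcongr
      _ ≤ 3 := by norm_num

lemma zdGraph_two_lt_edist (a b : {x : ZMod n // ZDVertex n x}) (hab : (a : ZMod n) * b ≠ 0)
    (hann : ∀ c : ZMod n, (a : ZMod n) * c = 0 → (b : ZMod n) * c = 0 → c = 0) :
    2 < (zdGraph n).edist a b := by
  refine SimpleGraph.two_lt_edist_iff.mpr ⟨?_, fun h => hab h.2, ?_⟩
  · rintro rfl
    obtain ⟨y, hy, hay⟩ := a.2.2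
    exact hy (hann y hay hay)
  · refine Set.eq_empty_of_forall_notMem fun c hc => ?_
    obtain ⟨hac, hcb⟩ := (SimpleGraph.mem_commonNeighbors _).mp hc
    exact c.2.1 (hann c hac.2 hcb.2)

end ZeroDivisorGraph

theorem stmt11_general (n p q : ℕ) (hp : p.Prime) (hq : q.Prime)
    (hpq : p ≠ q) (hpn : p ∣ n) (hqn : q ∣ n) (hbig : p * q < n) :
    (zdGraph n).diam = 3 := by
  let P : {x : ZMod n // ZDVertex n x} :=
    ⟨p, zdVertex_natCast_of_dvd hpn hp.one_lt ((Nat.le_mul_of_pos_right p hq.pos).trans_lt hbig)⟩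
  let Q : {x : ZMod n // ZDVertex n x} :=
    ⟨q, zdVertex_natCast_of_dvd hqn hq.one_lt ((Nat.le_mul_of_pos_left q hp.pos).trans_lt hbig)⟩
  have hPQ_ne_zero : (P : ZMod n) * Q ≠ 0 := by
    rw [← Nat.cast_mul]
    exact ZMod.natCast_ne_zero_of_pos_of_lt (Nat.mul_pos hp.pos hq.pos) hbig
  have hcop : IsCoprime (p : ZMod n) q := ((Nat.coprime_primes hp hq).mpr hpq).cast
  have hPQ : (zdGraph n).edist P Q = 3 :=
    le_antisymm (zdGraph_edist_le_three P Q) <| Order.add_one_le_of_lt <|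
      zdGraph_two_lt_edist P Q hPQ_ne_zero fun _ => eq_zero_of_isCoprime_of_mul_eq_zero hcop
  have hediam : (zdGraph n).ediam = 3 :=
    le_antisymm (SimpleGraph.ediam_le_of_edist_le zdGraph_edist_le_three)
      (hPQ ▸ SimpleGraph.edist_le_ediam)
  rw [SimpleGraph.diam, hediam]
  rfl

theorem stmt11 (n p q : ℕ) (hn : 0 < n) (hp : p.Prime) (hq : q.Prime)
    (hpq : p ≠ q) (hpn : p ∣ n) (hqn : q ∣ n) (hbig : p * q < n) :
    (zdGraph n).diam = 3 :=
  stmt11_general n p q hp hq hpq hpn hqn hbig
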